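/- In the setting of the previous proposition, assume additionally that gcd(n, r-1) = 1. Then the tuple (s₀, s₁, …, s_{r-2}) ∈ (L^r)^{r-1} satisfying (i) H₀ = B(span_K{s₀, …, s_{r-2}}) and (ii) v = s₀ + ∑_{i=1}^{r-2} ρ_i s_i is unique: if (s₀, …, s_{r-2}) and (s₀', …, s_{r-2}') both satisfy (i) and (ii), then s_j = s_j' for all j. -/
import Mathlib


open Submodule Module

/-- `BSet L X` is the set of projective points (1-dimensional `L`-subspaces of `W`)
spanned by the nonzero vectors of `X`. -/
def BSet (L : Type*) [Field L] {W : Type*} [AddCommGroup W] [Module L W]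
    (X : Set W) : Set (Submodule L W) :=
  {P | ∃ x ∈ X, x ≠ 0 ∧ P = Submodule.span L {x}}

/-- The splash of the `q`-subgeometry `B(V)` of `PG(W)` on the line `PG(U)`:
the set of points of `PG(U)` lying in the `L`-span (extension) of some hyperplane
(`(r-1)`-dimensional `K`-subspace) of `V`. -/
def Splash (K L : Type*) [Field K] [Field L] [Algebra K L]
    {W : Type*} [AddCommGroup W] [Module L W] [Module K W] [IsScalarTower K L W]
    (V : Submodule K W) (U : Submodule L W) (r : ℕ) : Set (Submodule L W) :=
  {P | Module.finrank L P = 1 ∧ P ≤ U ∧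
    ∃ H : Submodule K W, H ≤ V ∧ Module.finrank K H = r - 1 ∧
      P ≤ Submodule.span L (H : Set W)}

section Aux

set_option linter.unusedSectionVars false

variable {K L M : Type*} [Field K] [Field L] [Algebra K L]
  [AddCommGroup M] [Module L M] [Module K M] [IsScalarTower K L M]

lemma spanL_le_of_BSet_subset {X Y : Submodule K M}
    (h : BSet L (X : Set M) ⊆ BSet L (Y : Set M)) :
    Submodule.span L (X : Set M) ≤ Submodule.span L (Y : Set M) := by
  rw [Submodule.span_le]
  intro x hx
  by_cases hx0 : x = 0
  · simp [hx0, Submodule.zero_mem]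
  · have : Submodule.span L {x} ∈ BSet L (X : Set M) := ⟨x, hx, hx0, rfl⟩
    obtain ⟨y, hy, hy0, hxy⟩ := h this
    have : x ∈ Submodule.span L {y} := by
      rw [← hxy]; exact Submodule.mem_span_singleton_self x
    exact Submodule.span_mono (Set.singleton_subset_iff.mpr hy) this

lemma spanL_eq_of_BSet_eq {X Y : Submodule K M}
    (h : BSet L (X : Set M) = BSet L (Y : Set M)) :
    Submodule.span L (X : Set M) = Submodule.span L (Y : Set M) :=
  le_antisymm (spanL_le_of_BSet_subset h.le) (spanL_le_of_BSet_subset h.ge)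

lemma finrank_spanL_le (X : Submodule K M) [FiniteDimensional K X] :
    finrank L (Submodule.span L (X : Set M)) ≤ finrank K X := by
  classical
  set d := finrank K X
  let b := Module.finBasis K X
  let f : Fin d → M := fun i => (b i : M)
  have hXspan : (X : Set M) ⊆ (Submodule.span K (Set.range f) : Set M) := by
    intro x hx
    have : (⟨x, hx⟩ : X) ∈ Submodule.span K (Set.range b) := by
      rw [b.span_eq]; trivial
    have := Submodule.mem_map_of_mem (f := X.subtype) this
    rw [Submodule.map_span] at this
    simpa [f, ← Set.range_comp, Function.comp_def] using this
  have h1 : Submodule.span L (X : Set M) = Submodule.span L (Set.range f) := by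
    apply le_antisymm
    · rw [Submodule.span_le]
      intro x hx
      exact Submodule.span_subset_span K L _ (hXspan hx)
    · apply Submodule.span_mono
      intro x hx
      obtain ⟨i, rfl⟩ := hx
      exact (b i).2
  rw [h1]
  calc finrank L (Submodule.span L (Set.range f)) ≤ Fintype.card (Fin d) :=
        finrank_range_le_card _
    _ = d := by simp

lemma finrank_spanL_ge (r : ℕ) (hr : 1 ≤ r) [FiniteDimensional K M] [FiniteDimensional L M]
    (V H : Submodule K M) (hHV : H ≤ V)
    (hV : finrank K V = r) (hH : finrank K H = r - 1)
    (hVspan : Submodule.span L (V : Set M) = ⊤) (hM : finrank L M = r) :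
    r - 1 ≤ finrank L (Submodule.span L (H : Set M)) := by
  have hne : H ≠ V := by
    intro h; rw [h, hV] at hH; omega
  obtain ⟨x, hxV, hxH⟩ := SetLike.exists_of_lt (lt_of_le_of_ne hHV hne)
  have hsup : H ⊔ Submodule.span K {x} = V := by
    apply Submodule.eq_of_le_of_finrank_le
    · exact sup_le hHV ((Submodule.span_singleton_le_iff_mem x V).mpr hxV)
    · have hlt : H < H ⊔ Submodule.span K {x} := by
        apply lt_of_le_of_ne le_sup_left
        intro h
        exact hxH (h ▸ (le_sup_right (a := H)) (Submodule.mem_span_singleton_self x))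
      have := Submodule.finrank_lt_finrank_of_lt hlt
      rw [hH] at this
      omega
  have hsub : (V : Set M) ⊆
      (Submodule.span L (H : Set M) ⊔ Submodule.span L {x} : Submodule L M) := by
    intro y hy
    rw [← hsup] at hy
    obtain ⟨h, hh, z, hz, rfl⟩ := Submodule.mem_sup.mp hy
    apply Submodule.add_mem
    · exact Submodule.mem_sup_left (Submodule.subset_span hh)
    · apply Submodule.mem_sup_right
      exact Submodule.span_subset_span K L _ hz
  have htop : (⊤ : Submodule L M) ≤ Submodule.span L (H : Set M) ⊔ Submodule.span L {x} := by
    rw [← hVspan]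
    exact Submodule.span_le.mpr hsub
  have h1 : r ≤ finrank L
      ((Submodule.span L (H : Set M) ⊔ Submodule.span L {x} : Submodule L M)) := by
    calc r = finrank L (⊤ : Submodule L M) := by rw [finrank_top, hM]
      _ ≤ _ := Submodule.finrank_mono htop
  have h2 := Submodule.finrank_add_le_finrank_add_finrank (Submodule.span L (H : Set M))
    (Submodule.span L ({x} : Set M))
  have h3 : finrank L (Submodule.span L ({x} : Set M)) = 1 := by
    apply finrank_span_singleton
    intro h; exact hxH (h ▸ H.zero_mem)
  omega

lemma coeff_eq {ι : Type*} [Fintype ι] {s : ι → M} (hs : LinearIndependent L s) {x y : ι → L}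
    (h : ∑ i, x i • s i = ∑ i, y i • s i) : x = y := by
  have h0 : ∑ i, (x - y) i • s i = 0 := by
    simp only [Pi.sub_apply, sub_smul, Finset.sum_sub_distrib, h, sub_self]
  have := Fintype.linearIndependent_iff.mp hs (x - y) h0
  funext i
  have := this i
  simp only [Pi.sub_apply, sub_eq_zero] at this
  exact this

lemma exists_minor_ne {m : ℕ} (a b : Fin m → K) (ha : a ≠ 0)
    (hnd : ∀ κ : K, b ≠ κ • a) : ∃ k l, a k * b l ≠ a l * b k := by
  by_contra hcon
  push_neg at hcon
  have hk : ∃ k, a k ≠ 0 := by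
    by_contra h; push_neg at h; exact ha (funext h)
  obtain ⟨k, hk⟩ := hk
  apply hnd (b k / a k)
  funext l
  have h := hcon k l
  simp only [Pi.smul_apply, smul_eq_mul]
  rw [div_mul_eq_mul_div, eq_div_iff hk]
  linear_combination h

lemma li_pair {ι : Type*} {v : ι → M} (hv : LinearIndependent L v) {i j : ι} (hij : i ≠ j)
    (x y : L) (h : x • v i + y • v j = 0) : x = 0 ∧ y = 0 := by
  have hinj : Function.Injective (![i, j] : Fin 2 → ι) := by
    intro a b hab
    fin_cases a <;> fin_cases b <;> simp_all <;> exact absurd hab hij.symm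
  have h2 := hv.comp ![i, j] hinj
  have h3 : v ∘ ![i, j] = ![v i, v j] := by
    funext k; fin_cases k <;> simp
  rw [h3] at h2
  exact LinearIndependent.pair_iff.mp h2 x y h

end Aux

section Stable

set_option synthInstance.maxHeartbeats 1000000 in
set_option maxHeartbeats 1000000 in
lemma algebraMap_range_of_mul_stable {K L : Type*} [Field K] [Field L] [Algebra K L]
    [FiniteDimensional K L] {n m : ℕ} (hn : Module.finrank K L = n)
    (hgcd : Nat.gcd n m = 1) (D : Submodule K L) (hD : Module.finrank K D = m)
    (μ : L) (hμ : ∀ d ∈ D, μ * d ∈ D) : ∃ κ : K, μ = algebraMap K L κ := by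
  classical
  let S : Subalgebra K L :=
    { carrier := {x | ∀ d ∈ D, x * d ∈ D}
      mul_mem' := by
        intro x y hx hy d hd
        rw [mul_assoc]
        exact hx _ (hy d hd)
      one_mem' := by intro d hd; simpa using hd
      add_mem' := by
        intro x y hx hy d hd
        rw [add_mul]
        exact D.add_mem (hx d hd) (hy d hd)
      zero_mem' := by intro d hd; simp [D.zero_mem]
      algebraMap_mem' := by
        intro k d hd
        rw [← Algebra.smul_def]
        exact D.smul_mem k hd }
  have hinv : ∀ x ∈ S, x⁻¹ ∈ S := by
    intro x hx
    exact S.inv_mem_of_algebraic (IsAlgebraic.of_finite K ((⟨x, hx⟩ : S) : L))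
  let F : IntermediateField K L := S.toIntermediateField hinv
  let D' : Submodule F L :=
    { carrier := (D : Set L)
      add_mem' := fun ha hb => D.add_mem ha hb
      zero_mem' := D.zero_mem
      smul_mem' := by
        intro f d hd
        rw [Algebra.smul_def]
        exact f.2 d hd }
  have hDD' : Submodule.restrictScalars K D' = D := by
    ext x; exact Iff.rfl
  have ht : Module.finrank K F * Module.finrank F D' = Module.finrank K D' :=
    Module.finrank_mul_finrank K F D'
  have hKD' : Module.finrank K D' = m := by
    rw [show (Module.finrank K D' = Module.finrank K (Submodule.restrictScalars K D')) from rfl,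
      hDD', hD]
  have hdvd1 : Module.finrank K F ∣ m := ⟨_, (hKD' ▸ ht).symm⟩
  have hdvd2 : Module.finrank K F ∣ n := by
    refine ⟨Module.finrank F L, ?_⟩
    rw [Module.finrank_mul_finrank K F L, hn]
  have h1 : Module.finrank K F = 1 := Nat.dvd_one.mp (hgcd ▸ Nat.dvd_gcd hdvd2 hdvd1)
  have hbot : F = ⊥ := IntermediateField.finrank_eq_one_iff.mp h1
  have hμF : μ ∈ F := hμ
  rw [hbot, IntermediateField.mem_bot] at hμF
  obtain ⟨κ, hκ⟩ := hμF
  exact ⟨κ, hκ.symm⟩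

end Stable

/-- if `gcd(n, r-1) = 1`, the tuple `s` satisfying (i) and (ii) of the
previous proposition is unique. -/
theorem tangent_splash_hyperplane_tuple_unique
    (K L : Type*) [Field K] [Field L] [Algebra K L] [Fintype K] [Fintype L]
    (r n : ℕ) (hr : 3 ≤ r) (hrn : r ≤ n) (hrank : Module.finrank K L = n)
    (hgcd : Nat.gcd n (r - 1) = 1)
    (V : Submodule K (Fin r → L))
    (hVrank : Module.finrank K V = r)
    (hVspan : Submodule.span L (V : Set (Fin r → L)) = ⊤)
    (U : Submodule L (Fin r → L)) (hU : Module.finrank L U = 2)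
    (T : Submodule L (Fin r → L))
    (htangent : {P | P ∈ BSet L (V : Set (Fin r → L)) ∧ P ≤ U} = {T})
    (hext : ∀ H : Submodule K (Fin r → L), H ≤ V → Module.finrank K H = r - 1 →
      ¬ U ≤ Submodule.span L (H : Set (Fin r → L)))
    (A : Set (Submodule L (Fin r → L))) (hTA : T ∉ A)
    (hsplash : Splash K L V U r = insert T A)
    (P : Submodule L (Fin r → L)) (hP : P ∈ A)
    (u v : Fin r → L) (hu : u ∈ U) (hv : v ∈ U)
    (ρ : Fin (r - 2) → L)
    (hρ : LinearIndependent K (Fin.cons (1 : L) ρ : Fin (r - 2 + 1) → L))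
    (hTu : T = Submodule.span L {u}) (hPv : P = Submodule.span L {v})
    (hApar : A = {Q | ∃ (x : K) (y : Fin (r - 2) → K),
      Q = Submodule.span L
        {(algebraMap K L x + ∑ i, algebraMap K L (y i) * ρ i) • u + v}})
    (H : Submodule K (Fin r → L)) (hHV : H ≤ V)
    (hHrank : Module.finrank K H = r - 1)
    (hPH : P ≤ Submodule.span L (H : Set (Fin r → L))) :
    ∀ s s' : Fin (r - 2 + 1) → (Fin r → L),
      (BSet L (H : Set (Fin r → L)) =
          BSet L ((Submodule.span K (Set.range s) :
            Submodule K (Fin r → L)) : Set (Fin r → L)) ∧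
        v = s 0 + ∑ i : Fin (r - 2), ρ i • s i.succ) →
      (BSet L (H : Set (Fin r → L)) =
          BSet L ((Submodule.span K (Set.range s') :
            Submodule K (Fin r → L)) : Set (Fin r → L)) ∧
        v = s' 0 + ∑ i : Fin (r - 2), ρ i • s' i.succ) →
      s = s' := by
  classical
  have hKL : FiniteDimensional K L := FiniteDimensional.of_finrank_pos (by omega : 0 < _)
  have hLM : FiniteDimensional L (Fin r → L) := by infer_instance
  have hKM : FiniteDimensional K (Fin r → L) := FiniteDimensional.trans K L (Fin r → L)
  set ι := Fin (r - 2 + 1) with hι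
  set φ := algebraMap K L with hφ
  have hφinj : Function.Injective φ := (algebraMap K L).injective
  set c : ι → L := Fin.cons (1 : L) ρ with hc
  have hcard : Fintype.card ι = r - 1 := by simp [hι]; omega
  -- the L-span of H has dimension r - 1
  have hMr : finrank L (Fin r → L) = r := Module.finrank_fin_fun L
  have hHfd : FiniteDimensional K H := by infer_instance
  have hHle := finrank_spanL_le (L := L) H
  have hHge := finrank_spanL_ge (L := L) r (by omega) V H hHV hVrank hHrank hVspan hMr
  have hHspan_rank : finrank L (Submodule.span L (H : Set (Fin r → L))) = r - 1 := by
    rw [hHrank] at hHle; omega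
  intro s s' hs hs'
  obtain ⟨hB, hvs⟩ := hs
  obtain ⟨hB', hvs'⟩ := hs'
  -- both s and s' are L-linearly independent
  have hspan_s : Submodule.span L (Set.range s) = Submodule.span L (H : Set (Fin r → L)) := by
    rw [← Submodule.span_span_of_tower (R := K) (S := L)]
    exact (spanL_eq_of_BSet_eq hB).symm
  have hspan_s' : Submodule.span L (Set.range s') = Submodule.span L (H : Set (Fin r → L)) := by
    rw [← Submodule.span_span_of_tower (R := K) (S := L)]
    exact (spanL_eq_of_BSet_eq hB').symm
  have hs_li : LinearIndependent L s := by
    rw [linearIndependent_iff_card_eq_finrank_span, Set.finrank]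
    rw [hspan_s, hHspan_rank, hcard]
  have hs'_li : LinearIndependent L s' := by
    rw [linearIndependent_iff_card_eq_finrank_span, Set.finrank]
    rw [hspan_s', hHspan_rank, hcard]
  -- v as a combination of the s k with coefficients c
  have expand : ∀ (t : ι → Fin r → L) (μ : L) (x : ι → K),
      μ • ∑ k, φ (x k) • t k = ∑ k, (μ * φ (x k)) • t k := by
    intro t μ x
    rw [Finset.smul_sum]
    simp [smul_smul]
  have hv_sum : ∀ t : ι → Fin r → L, (v = t 0 + ∑ i : Fin (r - 2), ρ i • t i.succ) →
      v = ∑ k, c k • t k := by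
    intro t ht
    rw [Fin.sum_univ_succ]
    simpa [hc] using ht
  have hvsum := hv_sum s hvs
  have hvsum' := hv_sum s' hvs'
  -- every element appearing in BSet comparisons
  have hWW' : BSet L ((Submodule.span K (Set.range s') : Submodule K (Fin r → L)) :
      Set (Fin r → L)) = BSet L ((Submodule.span K (Set.range s) :
      Submodule K (Fin r → L)) : Set (Fin r → L)) := by
    rw [← hB, ← hB']
  -- each nonzero element of span K (range s') is an L-multiple of an element of span K (range s)
  have key : ∀ w : Fin r → L, w ∈ Submodule.span K (Set.range s') → w ≠ 0 →
      ∃ (μ : L) (a : ι → K), μ ≠ 0 ∧ w = μ • ∑ k, φ (a k) • s k := by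
    intro w hw hw0
    have hmem : Submodule.span L {w} ∈ BSet L ((Submodule.span K (Set.range s') :
        Submodule K (Fin r → L)) : Set (Fin r → L)) := ⟨w, hw, hw0, rfl⟩
    rw [hWW'] at hmem
    obtain ⟨y, hy, hy0, hyw⟩ := hmem
    have hwy : w ∈ Submodule.span L {y} := by
      rw [← hyw]; exact Submodule.mem_span_singleton_self w
    obtain ⟨μ, rfl⟩ := Submodule.mem_span_singleton.mp hwy
    have hμ0 : μ ≠ 0 := by
      intro h; rw [h, zero_smul] at hw0; exact hw0 rfl
    obtain ⟨a, ha⟩ := (mem_span_range_iff_exists_fun K).mp hy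
    refine ⟨μ, a, hμ0, ?_⟩
    rw [← ha]
    congr 1
    refine Finset.sum_congr rfl fun k _ => ?_
    rw [hφ, algebraMap_smul]
  have hmem_s' : ∀ j : ι, s' j ∈ Submodule.span K (Set.range s') := fun j =>
    Submodule.subset_span (Set.mem_range_self j)
  have hs'_ne : ∀ j : ι, s' j ≠ 0 := fun j => hs'_li.ne_zero j
  have hkey : ∀ j : ι, ∃ (μ : L) (a : ι → K), μ ≠ 0 ∧ s' j = μ • ∑ k, φ (a k) • s k :=
    fun j => key (s' j) (hmem_s' j) (hs'_ne j)
  choose μ a hμ0 hμ using hkey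
  -- the coefficient vectors a j are nonzero
  have ha0 : ∀ j : ι, a j ≠ 0 := by
    intro j hj
    apply hs'_ne j
    rw [hμ j, hj]
    simp
  -- s' j is never an L-multiple of s' 0 for j ≠ 0
  have hnotmul : ∀ j : ι, j ≠ 0 → ∀ lam : L, s' j ≠ lam • s' 0 := by
    intro j hj lam heqq
    have h0 : lam • s' 0 + (-1 : L) • s' j = 0 := by
      rw [← heqq]; simp
    have := (li_pair hs'_li (Ne.symm hj) lam (-1) h0).2
    norm_num at this
  -- for j ≠ 0 : μ j is a K-multiple of μ 0
  have hratio : ∀ j : ι, ∃ κ : K, μ j = φ κ * μ 0 := by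
    intro j
    by_cases hj : j = 0
    · exact ⟨1, by simp [hj]⟩
    -- the sum s' 0 + s' j is a nonzero element of span K (range s')
    have hsum_mem : s' 0 + s' j ∈ Submodule.span K (Set.range s') :=
      Submodule.add_mem _ (hmem_s' 0) (hmem_s' j)
    have hsum_ne : s' 0 + s' j ≠ 0 := by
      intro h0
      have h1 : (1 : L) • s' 0 + (1 : L) • s' j = 0 := by simpa using h0
      have := (li_pair hs'_li (Ne.symm hj) 1 1 h1).1
      norm_num at this
    obtain ⟨γ, cc, hγ0, hγ⟩ := key _ hsum_mem hsum_ne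
    -- coefficient equations
    have hγ2 : ∑ k, (μ 0 * φ (a 0 k) + μ j * φ (a j k)) • s k = ∑ k, (γ * φ (cc k)) • s k := by
      calc ∑ k, (μ 0 * φ (a 0 k) + μ j * φ (a j k)) • s k
          = (∑ k, (μ 0 * φ (a 0 k)) • s k) + ∑ k, (μ j * φ (a j k)) • s k := by
            rw [← Finset.sum_add_distrib]
            exact Finset.sum_congr rfl fun k _ => add_smul _ _ _
        _ = s' 0 + s' j := by rw [← expand, ← expand, ← hμ 0, ← hμ j]
        _ = γ • ∑ k, φ (cc k) • s k := hγ
        _ = ∑ k, (γ * φ (cc k)) • s k := expand _ _ _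
    have hcoeff := coeff_eq hs_li hγ2
    have e : ∀ k, μ 0 * φ (a 0 k) + μ j * φ (a j k) = γ * φ (cc k) :=
      fun k => congrFun hcoeff k
    -- a j is not a K-multiple of a 0
    have hnd : ∀ κ : K, a j ≠ κ • a 0 := by
      intro κ hκa
      apply hnotmul j hj (μ j * φ κ * (μ 0)⁻¹)
      rw [hμ j, hμ 0, hκa]
      have hre : ∑ k, φ ((κ • a 0) k) • s k = φ κ • ∑ k, φ (a 0 k) • s k := by
        rw [Finset.smul_sum]
        refine Finset.sum_congr rfl fun k _ => ?_
        simp [map_mul, smul_smul]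
      rw [hre, smul_smul, smul_smul]
      congr 1
      rw [mul_assoc, inv_mul_cancel₀ (hμ0 0), mul_one]
    obtain ⟨k, l, hkl⟩ := exists_minor_ne (a 0) (a j) (ha0 0) hnd
    have e1 := e k
    have e2 := e l
    -- determinant computations
    have hd : φ (a 0 k * a j l - a 0 l * a j k) ≠ 0 := by
      rw [map_ne_zero_iff φ hφinj, sub_ne_zero]
      exact hkl
    have hγe : γ * φ (cc k * a j l - cc l * a j k) = μ 0 * φ (a 0 k * a j l - a 0 l * a j k) := by
      simp only [map_sub, map_mul]
      linear_combination (-(φ (a j l))) * e1 + φ (a j k) * e2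
    have he : φ (cc k * a j l - cc l * a j k) ≠ 0 := by
      intro h0
      rw [h0, mul_zero] at hγe
      exact (mul_ne_zero (hμ0 0) hd) hγe.symm
    have he' : (cc k * a j l - cc l * a j k) ≠ 0 := by
      intro h0; exact he (by rw [h0, map_zero])
    have h3 : μ j * φ (a j k * a 0 l - a j l * a 0 k) =
        γ * φ (cc k * a 0 l - cc l * a 0 k) := by
      simp only [map_sub, map_mul]
      linear_combination φ (a 0 l) * e1 - φ (a 0 k) * e2
    refine ⟨-(cc k * a 0 l - cc l * a 0 k) / (cc k * a j l - cc l * a j k), ?_⟩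
    have h5 : φ (a 0 k * a j l - a 0 l * a j k) *
        (μ j * φ (cc k * a j l - cc l * a j k) +
          μ 0 * φ (cc k * a 0 l - cc l * a 0 k)) = 0 := by
      simp only [map_sub, map_mul] at h3 hγe ⊢
      linear_combination (-(φ (cc k) * φ (a j l) - φ (cc l) * φ (a j k))) * h3 +
        (-(φ (cc k) * φ (a 0 l) - φ (cc l) * φ (a 0 k))) * hγe
    have h6 : μ j * φ (cc k * a j l - cc l * a j k) +
        μ 0 * φ (cc k * a 0 l - cc l * a 0 k) = 0 := by
      rcases mul_eq_zero.mp h5 with h | h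
      · exact absurd h hd
      · exact h
    rw [map_div₀, map_neg]
    rw [div_mul_eq_mul_div, eq_div_iff he]
    linear_combination h6
  choose κ hκ using hratio
  -- now s' j = μ 0 • (combination with coefficients κ j • a j)
  set b : ι → ι → K := fun j => κ j • a j with hb
  have hs'b : ∀ j : ι, s' j = μ 0 • ∑ k, φ (b j k) • s k := by
    intro j
    rw [hμ j, hκ j, expand, expand]
    refine Finset.sum_congr rfl fun k _ => ?_
    simp only [hb, Pi.smul_apply, smul_eq_mul, map_mul]
    ring_nf
  -- coefficient comparison for v
  set d : ι → L := fun k => ∑ j, c j * φ (b j k) with hd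
  have hcd : ∀ k, c k = μ 0 * d k := by
    have hv2 : v = ∑ k, (μ 0 * d k) • s k := by
      rw [hvsum']
      have : ∀ j : ι, c j • s' j = ∑ k, (c j * (μ 0 * φ (b j k))) • s k := by
        intro j
        rw [hs'b j, expand, Finset.smul_sum]
        refine Finset.sum_congr rfl fun k _ => ?_
        rw [smul_smul]
      rw [Finset.sum_congr rfl fun j _ => this j, Finset.sum_comm]
      refine Finset.sum_congr rfl fun k _ => ?_
      rw [hd, Finset.mul_sum, Finset.sum_smul]
      refine Finset.sum_congr rfl fun j _ => ?_
      ring_nf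
    have := coeff_eq hs_li (x := c) (y := fun k => μ 0 * d k) (by rw [← hvsum, ← hv2])
    intro k; exact congrFun this k
  -- μ 0 is (the inverse of) an element of K
  set D : Submodule K L := Submodule.span K (Set.range c) with hD
  have hDrank : finrank K D = r - 1 := by
    rw [hD, finrank_span_eq_card hρ, hcard]
  have hdk_mem : ∀ k, d k ∈ D := by
    intro k
    rw [hd]
    apply Submodule.sum_mem
    intro j _
    rw [mul_comm, ← Algebra.smul_def]
    exact D.smul_mem _ (Submodule.subset_span (Set.mem_range_self j))
  have hstable : ∀ x ∈ D, (μ 0)⁻¹ * x ∈ D := by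
    intro x hx
    have hle : D ≤ Submodule.comap (LinearMap.mulLeft K ((μ 0)⁻¹)) D := by
      rw [hD, Submodule.span_le]
      rintro _ ⟨k, rfl⟩
      have hmm : (μ 0)⁻¹ * c k ∈ D := by
        rw [hcd k, inv_mul_cancel_left₀ (hμ0 0)]
        exact hdk_mem k
      exact hmm
    exact hle hx
  obtain ⟨κ₀, hκ₀⟩ := algebraMap_range_of_mul_stable hrank hgcd D hDrank ((μ 0)⁻¹) hstable
  have hκ₀0 : κ₀ ≠ 0 := by
    intro h
    rw [h, map_zero] at hκ₀
    exact inv_ne_zero (hμ0 0) hκ₀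
  -- final coefficient identification
  have hbval : ∀ k j : ι, b j k = if j = k then κ₀ else 0 := by
    intro k
    have hrel : ∑ j, (fun j => b j k - if j = k then κ₀ else 0) j • c j = 0 := by
      simp only [sub_smul, Finset.sum_sub_distrib]
      have h1 : ∑ j, b j k • c j = d k := by
        rw [hd]
        refine Finset.sum_congr rfl fun j _ => ?_
        rw [Algebra.smul_def, mul_comm]
      have h2 : ∑ j, (if j = k then κ₀ else 0 : K) • c j = κ₀ • c k := by
        rw [Finset.sum_eq_single k]
        · simp
        · intro j _ hjk; simp [hjk]
        · intro h; exact absurd (Finset.mem_univ k) h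
      rw [h1, h2, Algebra.smul_def, ← hκ₀, sub_eq_zero]
      rw [hcd k, inv_mul_cancel_left₀ (hμ0 0)]
    have := Fintype.linearIndependent_iff.mp hρ _ hrel
    intro j
    have hj := this j
    simpa [sub_eq_zero] using hj
  funext j
  rw [hs'b j]
  have hsum : ∑ k, φ (b j k) • s k = φ κ₀ • s j := by
    rw [Finset.sum_eq_single j]
    · rw [hbval j j]; simp
    · intro k _ hkj
      rw [hbval k j]
      simp [Ne.symm hkj, hkj]
    · intro h; exact absurd (Finset.mem_univ j) h
  rw [hsum, smul_smul, ← hκ₀]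
  rw [mul_inv_cancel₀ (hμ0 0), one_smul]
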